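/- arXiv:2504.19621 — 2 statements merged into one kernel-verified Lean document; each statement's English description precedes it below -/
import Mathlib

section
/- Let μ and ν be probability measures on a measurable space with μ absolutely continuous with respect to ν, and let T be a bounded measurable real-valued function. Then ∫ T dμ − log ∫ exp(T) dν ≤ KL(μ ‖ ν), where KL denotes the Kullback–Leibler divergence. (This is the one-sided Donsker–Varadhan bound underlying the MINE objective of Section 3.3 and Appendix C: for any neural network T_θ, the quantity 𝔼_{P_{XZ}}[T_θ] − log 𝔼_{P_X ⊗ P_Z}[e^{T_θ}] is a lower bound on the mutual information I(X;Z) = KL(P_{XZ} ‖ P_X ⊗ P_Z).) -/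
open MeasureTheory
open scoped Classical

/-- The Kullback–Leibler divergence `KL(μ ‖ ν)`, defined as `∫ log (dμ/dν) dμ` when `μ ≪ ν`
(and this log-likelihood ratio is integrable, so that the integral is meaningful),
and `+∞` otherwise, with values in the extended reals. -/
noncomputable def klDiv {α : Type*} [MeasurableSpace α] (μ ν : Measure α) : EReal :=
  if μ ≪ ν ∧ Integrable (llr μ ν) μ then ((∫ x, llr μ ν x ∂μ : ℝ) : EReal) else ⊤

/-! Tilting `ν` by `exp f` gives a probability measure `ν_f` with
`llr μ ν_f = llr μ ν - f + log ∫ exp f dν`, so Gibbs' inequality `0 ≤ ∫ llr μ ν_f dμ`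
is exactly the Donsker–Varadhan bound. -/

lemma integral_llr_nonneg {α : Type*} [MeasurableSpace α] {μ ν : Measure α}
    [IsProbabilityMeasure μ] [IsProbabilityMeasure ν] (hμν : μ ≪ ν)
    (h_int : Integrable (llr μ ν) μ) : 0 ≤ ∫ x, llr μ ν x ∂μ := by
  simpa using InformationTheory.integral_llr_add_sub_measure_univ_nonneg hμν h_int

lemma integral_sub_log_integral_exp_le_integral_llr {α : Type*} [MeasurableSpace α]
    {μ ν : Measure α} [IsProbabilityMeasure μ] [IsProbabilityMeasure ν] (hμν : μ ≪ ν)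
    (h_int : Integrable (llr μ ν) μ) {f : α → ℝ} (hfμ : Integrable f μ)
    (hfν : Integrable (fun x ↦ Real.exp (f x)) ν) :
    ∫ x, f x ∂μ - Real.log (∫ x, Real.exp (f x) ∂ν) ≤ ∫ x, llr μ ν x ∂μ := by
  have : IsProbabilityMeasure (ν.tilted f) := isProbabilityMeasure_tilted hfν
  have h_gibbs := integral_llr_nonneg (hμν.trans (absolutelyContinuous_tilted hfν))
    (integrable_llr_tilted_right hμν hfμ h_int hfν)
  rw [integral_llr_tilted_right hμν hfμ hfν h_int] at h_gibbs
  linarith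

lemma integrable_exp_of_abs_le {α : Type*} [MeasurableSpace α] {μ : Measure α}
    [IsFiniteMeasure μ] {f : α → ℝ} (hf : Measurable f) {C : ℝ} (hfC : ∀ x, |f x| ≤ C) :
    Integrable (fun x ↦ Real.exp (f x)) μ :=
  Integrable.of_bound hf.exp.aestronglyMeasurable (Real.exp C) <| ae_of_all _ fun x ↦ by
    rw [Real.norm_eq_abs, Real.abs_exp]
    exact Real.exp_le_exp.mpr (abs_le.mp (hfC x)).2

theorem donsker_varadhan_lower_bound
    {α : Type*} [MeasurableSpace α] {μ ν : Measure α}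
    [IsProbabilityMeasure μ] [IsProbabilityMeasure ν] (hμν : μ ≪ ν)
    {T : α → ℝ} (hTmeas : Measurable T) {C : ℝ} (hTbdd : ∀ x, |T x| ≤ C) :
    ((∫ x, T x ∂μ - Real.log (∫ x, Real.exp (T x) ∂ν) : ℝ) : EReal) ≤ klDiv μ ν := by
  by_cases h_int : Integrable (llr μ ν) μ
  · rw [klDiv, if_pos ⟨hμν, h_int⟩, EReal.coe_le_coe_iff]
    exact integral_sub_log_integral_exp_le_integral_llr hμν h_int
      (Integrable.of_bound hTmeas.aestronglyMeasurable C (ae_of_all _ hTbdd))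
      (integrable_exp_of_abs_le hTmeas hTbdd)
  · rw [klDiv, if_neg fun h ↦ h_int h.2]
    exact le_top
end

section
/- Let μ and ν be probability measures on a standard Borel measurable space with μ absolutely continuous with respect to ν. Then KL(μ ‖ ν) = sup over bounded measurable real-valued functions T of ( ∫ T dμ − log ∫ exp(T) dν ). (Donsker–Varadhan dual representation of the KL-divergence, stated in Appendix C as the basis for Mutual Information Neural Estimation: the mutual information I(X;Z) = KL(P_{XZ} ‖ P_X ⊗ P_Z) is the supremum of the variational objective over test functions.) -/
open MeasureTheory
open scoped Classical

/-!
Upper bound: for bounded `T`, tilting `ν` by `exp T` gives a probability measure `ν_T` with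
`∫ llr μ ν_T ∂μ = ∫ llr μ ν ∂μ - (∫ T ∂μ - log ∫ exp T ∂ν)`, and the left side is nonnegative by
Gibbs' inequality.

Lower bound: `log (dμ/dν)`, clamped to `[-n, n]`, is an admissible `T_n`. By dominated convergence
`∫ exp T_n ∂ν → 1`, while `∫ T_n ∂μ ≥ ∫ min (llr μ ν) n ∂μ`, which tends by monotone convergence to
`∫ llr μ ν ∂μ`, or to `+∞` when `llr μ ν` is not integrable (its negative part always is, being
dominated by `exp (-llr μ ν) = dν/dμ`).
-/

open Real Filter Topology

lemma tendsto_min_of_tendsto_atTop {ι β : Type*} [LinearOrder β] [TopologicalSpace β]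
    {l : Filter ι} {g : ι → β} (a : β) (hg : Tendsto g l atTop) :
    Tendsto (fun i ↦ min a (g i)) l (𝓝 a) :=
  tendsto_const_nhds.congr' <| (hg.eventually_ge_atTop a).mono fun _ h ↦ (min_eq_left h).symm

lemma abs_min_le_abs_min_zero_add_abs (a c : ℝ) : |min a c| ≤ |min a 0| + |c| := by
  grind

section IntegralMinNatCast

variable {α : Type*} [MeasurableSpace α] {μ : Measure α} {f : α → ℝ}

lemma integrable_min_const [IsFiniteMeasure μ] (hf : AEStronglyMeasurable f μ)
    (hf_neg : Integrable (fun x ↦ min (f x) 0) μ) (c : ℝ) :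
    Integrable (fun x ↦ min (f x) c) μ :=
  (hf_neg.abs.add (integrable_const |c|)).mono' (hf.inf aestronglyMeasurable_const)
    (ae_of_all _ fun x ↦ abs_min_le_abs_min_zero_add_abs (f x) c)

lemma tendsto_integral_min_natCast [IsFiniteMeasure μ] (hf : Integrable f μ) :
    Tendsto (fun n : ℕ ↦ ∫ x, min (f x) n ∂μ) atTop (𝓝 (∫ x, f x ∂μ)) :=
  integral_tendsto_of_tendsto_of_monotone
    (fun n ↦ integrable_min_const hf.1 (hf.inf (integrable_const 0)) n) hf
    (ae_of_all _ fun _ _ _ hmn ↦ min_le_min_left _ (Nat.mono_cast hmn))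
    (ae_of_all _ fun x ↦ tendsto_min_of_tendsto_atTop (f x) tendsto_natCast_atTop_atTop)

lemma tendsto_integral_min_natCast_atTop [IsFiniteMeasure μ] (hf : AEStronglyMeasurable f μ)
    (hf_neg : Integrable (fun x ↦ min (f x) 0) μ) (hf_int : ¬ Integrable f μ) :
    Tendsto (fun n : ℕ ↦ ∫ x, min (f x) n ∂μ) atTop atTop := by
  have hpos_nonneg : 0 ≤ᵐ[μ] fun x ↦ max (f x) 0 := ae_of_all _ fun x ↦ le_max_right _ _
  have hpos_meas : AEStronglyMeasurable (fun x ↦ max (f x) 0) μ :=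
    hf.sup aestronglyMeasurable_const
  have hpos_int (n : ℕ) : Integrable (fun x ↦ min (max (f x) 0) n) μ :=
    integrable_min_const hpos_meas ((integrable_const 0).congr (ae_of_all _ fun x ↦ by simp)) n
  have hsplit (n : ℕ) :
      ∫ x, min (f x) n ∂μ = ∫ x, min (max (f x) 0) n ∂μ + ∫ x, min (f x) 0 ∂μ := by
    rw [← integral_add (hpos_int n) hf_neg]
    congr 1 with x
    rcases le_total (f x) 0 with h | h
    · simp [h, h.trans n.cast_nonneg]
    · simp [h]
  have hlintegral_top : ∫⁻ x, ENNReal.ofReal (max (f x) 0) ∂μ = ⊤ := by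
    by_contra h
    have hpos : Integrable (fun x ↦ max (f x) 0) μ :=
      ⟨hpos_meas, (hasFiniteIntegral_iff_ofReal hpos_nonneg).2 (lt_top_iff_ne_top.2 h)⟩
    exact hf_int ((hpos.add hf_neg).congr (ae_of_all _ fun x ↦ by simp [max_add_min]))
  simp_rw [hsplit]
  refine Tendsto.atTop_add ?_ tendsto_const_nhds
  rw [← ENNReal.tendsto_ofReal_nhds_top, ← hlintegral_top]
  simp_rw [ofReal_integral_eq_lintegral_ofReal (hpos_int _)
    (hpos_nonneg.mono fun x hx ↦ le_min hx (Nat.cast_nonneg _))]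
  exact lintegral_tendsto_of_tendsto_of_monotone
    (fun n ↦ (hpos_int n).1.aemeasurable.ennreal_ofReal)
    (ae_of_all _ fun _ _ _ hmn ↦ ENNReal.ofReal_le_ofReal (min_le_min_left _ (Nat.mono_cast hmn)))
    (ae_of_all _ fun x ↦ (ENNReal.continuous_ofReal.tendsto _).comp
      (tendsto_min_of_tendsto_atTop _ tendsto_natCast_atTop_atTop))

end IntegralMinNatCast

section KL

variable {α : Type*} [MeasurableSpace α] {μ ν : Measure α}

noncomputable def donskerVaradhanObjective (μ ν : Measure α) (T : α → ℝ) : ℝ :=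
  ∫ x, T x ∂μ - log (∫ x, exp (T x) ∂ν)

lemma donskerVaradhanObjective_le_integral_llr [IsProbabilityMeasure μ] [SigmaFinite ν] [NeZero ν]
    (hμν : μ ≪ ν) (h_int : Integrable (llr μ ν) μ) {T : α → ℝ} (hTμ : Integrable T μ)
    (hTν : Integrable (fun x ↦ exp (T x)) ν) :
    donskerVaradhanObjective μ ν T ≤ ∫ x, llr μ ν x ∂μ := by
  have := isProbabilityMeasure_tilted hTν
  have hgibbs := InformationTheory.integral_llr_add_sub_measure_univ_nonneg
    (hμν.trans (absolutelyContinuous_tilted hTν)) (integrable_llr_tilted_right hμν hTμ h_int hTν)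
  rw [integral_llr_tilted_right hμν hTμ hTν h_int] at hgibbs
  simp only [probReal_univ] at hgibbs
  rw [donskerVaradhanObjective]
  linarith

lemma coe_donskerVaradhanObjective_le_klDiv [IsProbabilityMeasure μ] [SigmaFinite ν] [NeZero ν]
    {T : α → ℝ} (hTμ : Integrable T μ) (hTν : Integrable (fun x ↦ exp (T x)) ν) :
    (donskerVaradhanObjective μ ν T : EReal) ≤ klDiv μ ν := by
  rw [klDiv]
  split_ifs with h
  · exact EReal.coe_le_coe_iff.2 (donskerVaradhanObjective_le_integral_llr h.1 h.2 hTμ hTν)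
  · exact le_top

lemma integrable_min_llr_zero [SigmaFinite μ] [IsFiniteMeasure ν] (hμν : μ ≪ ν) :
    Integrable (fun x ↦ min (llr μ ν x) 0) μ := by
  have hexp : Integrable (fun x ↦ exp (-llr μ ν x)) μ :=
    (integrable_congr (exp_neg_llr hμν)).2 Measure.integrable_toReal_rnDeriv
  refine hexp.mono' ((measurable_llr μ ν).min measurable_const).aestronglyMeasurable
    (ae_of_all _ fun x ↦ ?_)
  have := add_one_le_exp (-llr μ ν x)
  have := exp_pos (-llr μ ν x)
  rw [norm_eq_abs]
  grind

/-- Clamping the density, rather than `llr μ ν`, sends the null set of `μ.rnDeriv ν` to `-n`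
instead of to `log 0 = 0`; this is what makes `∫ exp (truncLlr μ ν n) dν` tend to `μ univ`. -/
noncomputable def truncLlr (μ ν : Measure α) (n : ℕ) (x : α) : ℝ :=
  log (max (exp (-n)) (min (μ.rnDeriv ν x).toReal (exp n)))

lemma measurable_truncLlr (μ ν : Measure α) (n : ℕ) : Measurable (truncLlr μ ν n) :=
  (measurable_const.max ((μ.measurable_rnDeriv ν).ennreal_toReal.min measurable_const)).log

lemma exp_truncLlr (μ ν : Measure α) (n : ℕ) (x : α) :
    exp (truncLlr μ ν n x) = max (exp (-n)) (min (μ.rnDeriv ν x).toReal (exp n)) :=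
  exp_log (lt_max_of_lt_left (exp_pos _))

lemma abs_truncLlr_le (μ ν : Measure α) (n : ℕ) (x : α) : |truncLlr μ ν n x| ≤ n := by
  rw [abs_le, ← exp_le_exp, ← exp_le_exp (y := (n : ℝ)), exp_truncLlr]
  exact ⟨le_max_left _ _, max_le (exp_le_exp.2 (neg_le_self n.cast_nonneg)) (min_le_right _ _)⟩

lemma min_llr_le_truncLlr {x : α} (hx : 0 < (μ.rnDeriv ν x).toReal) (n : ℕ) :
    min (llr μ ν x) n ≤ truncLlr μ ν n x := by
  rw [← exp_le_exp, exp_truncLlr, exp_monotone.map_min, llr, exp_log hx]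
  exact le_max_right _ _

lemma integral_min_llr_le_integral_truncLlr [IsFiniteMeasure μ] [IsFiniteMeasure ν]
    (hμν : μ ≪ ν) (n : ℕ) :
    ∫ x, min (llr μ ν x) n ∂μ ≤ ∫ x, truncLlr μ ν n x ∂μ := by
  refine integral_mono_ae
    (integrable_min_const (measurable_llr μ ν).aestronglyMeasurable (integrable_min_llr_zero hμν) n)
    (Integrable.of_bound (measurable_truncLlr μ ν n).aestronglyMeasurable n
      (ae_of_all _ (abs_truncLlr_le μ ν n)))
    ?_
  filter_upwards [Measure.rnDeriv_pos hμν, hμν.ae_le (μ.rnDeriv_lt_top ν)] with x hpos hlt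
  exact min_llr_le_truncLlr (ENNReal.toReal_pos hpos.ne' hlt.ne) n

lemma tendsto_integral_exp_truncLlr [IsFiniteMeasure μ] [IsFiniteMeasure ν] (hμν : μ ≪ ν) :
    Tendsto (fun n : ℕ ↦ ∫ x, exp (truncLlr μ ν n x) ∂ν) atTop (𝓝 (μ.real Set.univ)) := by
  simp_rw [exp_truncLlr, ← Measure.integral_toReal_rnDeriv hμν]
  refine tendsto_integral_of_dominated_convergence (fun x ↦ 1 + (μ.rnDeriv ν x).toReal)
    (fun n ↦ (measurable_const.max ((μ.measurable_rnDeriv ν).ennreal_toReal.min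
      measurable_const)).aestronglyMeasurable)
    ((integrable_const 1).add Measure.integrable_toReal_rnDeriv) (fun n ↦ ae_of_all _ fun x ↦ ?_)
    (ae_of_all _ fun x ↦ ?_)
  · have hd := (μ.rnDeriv ν x).toReal_nonneg
    rw [norm_eq_abs, abs_of_pos (lt_max_of_lt_left (exp_pos _))]
    refine max_le ?_ ((min_le_left _ _).trans (by linarith))
    linarith [exp_le_one_iff.2 (neg_nonpos.2 n.cast_nonneg)]
  · have hexp_neg : Tendsto (fun n : ℕ ↦ exp (-n)) atTop (𝓝 0) :=
      tendsto_exp_atBot.comp (tendsto_neg_atTop_atBot.comp tendsto_natCast_atTop_atTop)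
    have hmin := tendsto_min_of_tendsto_atTop (μ.rnDeriv ν x).toReal
      (tendsto_exp_atTop.comp tendsto_natCast_atTop_atTop)
    simpa [max_eq_right ENNReal.toReal_nonneg] using hexp_neg.max hmin

lemma tendsto_integral_min_llr_sub_log_integral_exp_truncLlr [IsProbabilityMeasure μ]
    [IsProbabilityMeasure ν] (hμν : μ ≪ ν) :
    Tendsto (fun n : ℕ ↦ ((∫ x, min (llr μ ν x) n ∂μ
      - log (∫ x, exp (truncLlr μ ν n x) ∂ν) : ℝ) : EReal)) atTop (𝓝 (klDiv μ ν)) := by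
  have hlog : Tendsto (fun n : ℕ ↦ log (∫ x, exp (truncLlr μ ν n x) ∂ν)) atTop (𝓝 0) := by
    have hZ := tendsto_integral_exp_truncLlr hμν
    rw [probReal_univ] at hZ
    simpa [Function.comp_def] using (continuousAt_log one_ne_zero).tendsto.comp hZ
  by_cases h_int : Integrable (llr μ ν) μ
  · rw [klDiv, if_pos ⟨hμν, h_int⟩]
    exact (continuous_coe_real_ereal.tendsto _).comp
      (by simpa using (tendsto_integral_min_natCast h_int).sub hlog)
  · rw [klDiv, if_neg fun h ↦ h_int h.2, EReal.tendsto_coe_nhds_top_iff]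
    simpa [sub_eq_add_neg] using (tendsto_integral_min_natCast_atTop
      (measurable_llr μ ν).aestronglyMeasurable (integrable_min_llr_zero hμν) h_int).atTop_add
      hlog.neg

end KL

theorem donsker_varadhan_representation_general
    {α : Type*} [MeasurableSpace α] {μ ν : Measure α}
    [IsProbabilityMeasure μ] [IsProbabilityMeasure ν] (hμν : μ ≪ ν) :
    klDiv μ ν
      = ⨆ (T : α → ℝ) (_ : Measurable T) (_ : ∃ C : ℝ, ∀ x, |T x| ≤ C),
          ((∫ x, T x ∂μ - Real.log (∫ x, Real.exp (T x) ∂ν) : ℝ) : EReal) := by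
  refine le_antisymm ?_ (iSup₂_le fun T hT ↦ iSup_le fun ⟨C, hC⟩ ↦ ?_)
  · refine le_of_tendsto' (tendsto_integral_min_llr_sub_log_integral_exp_truncLlr hμν) fun n ↦ ?_
    refine le_iSup₂_of_le (truncLlr μ ν n) (measurable_truncLlr μ ν n) <|
      le_iSup_of_le ⟨n, abs_truncLlr_le μ ν n⟩ ?_
    exact EReal.coe_le_coe_iff.2 (sub_le_sub_right (integral_min_llr_le_integral_truncLlr hμν n) _)
  · refine coe_donskerVaradhanObjective_le_klDiv (Integrable.of_bound hT.aestronglyMeasurable C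
      (ae_of_all _ hC)) (Integrable.of_bound hT.exp.aestronglyMeasurable (exp C)
      (ae_of_all _ fun x ↦ ?_))
    rw [norm_eq_abs, abs_of_pos (exp_pos _)]
    exact exp_le_exp.2 (le_of_abs_le (hC x))

theorem donsker_varadhan_representation
    {α : Type*} [MeasurableSpace α] [StandardBorelSpace α] {μ ν : Measure α}
    [IsProbabilityMeasure μ] [IsProbabilityMeasure ν] (hμν : μ ≪ ν) :
    klDiv μ ν
      = ⨆ (T : α → ℝ) (_ : Measurable T) (_ : ∃ C : ℝ, ∀ x, |T x| ≤ C),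
          ((∫ x, T x ∂μ - Real.log (∫ x, Real.exp (T x) ∂ν) : ℝ) : EReal) :=
  donsker_varadhan_representation_general hμν
end
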